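/- arXiv:1407.7726 — 2 statements merged into one kernel-verified Lean document; each statement's English description precedes it below -/
import Mathlib

section
/- For all nonnegative integers n, B_n = ∑_{i=0}^{n} (-1)^i * C(n+1, i+1) / C(n+i, i) * S(n+i, i), where B_n is the n-th Bernoulli number and S the Stirling number of the second kind (with S(n,0) interpreted as 1 if n=0 and 0 otherwise). -/
/-!
Let `f = (eˣ - 1)/x`, so that the Bernoulli generating function is `B = 1/f`. Since `1 - f` has
no constant term, `(1 - f)^(n+1) = O(x^(n+1))`, hence up to order `n` the series `B` agrees
with `B (1 - (1 - f)^(n+1)) = ∑_{i ≤ n} (-1)^i C(n+1, i+1) f^i`.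
Finally `f^i = (eˣ - 1)^i / x^i` and `(eˣ - 1)^i / i!` is the exponential generating function
of `S(·, i)`, so `[xⁿ] f^i = i! S(n+i, i) / (n+i)!`.
-/

/-- Stirling numbers of the second kind (so S(0,0)=1 and S(n,0)=0 for n>=1). -/
def stirling2 : ℕ → ℕ → ℕ
  | 0, 0 => 1
  | 0, _ + 1 => 0
  | _ + 1, 0 => 0
  | n + 1, k + 1 => (k + 1) * stirling2 n (k + 1) + stirling2 n k

theorem stirling2_eq_stirlingSecond : stirling2 = Nat.stirlingSecond := by
  funext m k
  induction m generalizing k with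
  | zero => cases k <;> rfl
  | succ m ih =>
    cases k with
    | zero => rfl
    | succ k => rw [stirling2, Nat.stirlingSecond_succ_succ, ih, ih]

open Finset Nat

theorem one_sub_one_sub_pow {R : Type*} [CommRing R] (x : R) (n : ℕ) :
    1 - (1 - x) ^ (n + 1) =
      ∑ i ∈ range (n + 1), ((-1) ^ i * (n + 1).choose (i + 1) : ℤ) • x ^ (i + 1) := by
  rw [sub_eq_neg_add 1 x, add_pow, sum_range_succ']
  simp only [pow_zero, one_pow, mul_one, choose_zero_right, cast_one]
  rw [sub_add_eq_sub_sub_swap, sub_self, zero_sub, ← sum_neg_distrib]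
  refine sum_congr rfl fun i _ => ?_
  rw [zsmul_eq_mul, neg_pow]
  push_cast
  ring

namespace PowerSeries

variable {R A : Type*} [CommRing R] [CommRing A] [Algebra ℚ A]

theorem coeff_eq_sum_coeff_pow_of_mul_eq_one {f g : R⟦X⟧} (hgf : g * f = 1)
    (hf : constantCoeff f = 1) (n : ℕ) :
    coeff n g =
      ∑ i ∈ range (n + 1), ((-1) ^ i * (n + 1).choose (i + 1) : ℤ) • coeff n (f ^ i) := by
  have hX : X ^ (n + 1) ∣ g * (1 - f) ^ (n + 1) :=
    (pow_dvd_pow_of_dvd (X_dvd_iff.mpr (by simp [hf])) _).mul_left g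
  calc coeff n g = coeff n (g * (1 - (1 - f) ^ (n + 1))) + coeff n (g * (1 - f) ^ (n + 1)) := by
        rw [← map_add]; congr 1; ring
    _ = coeff n (g * (1 - (1 - f) ^ (n + 1))) := by
        rw [X_pow_dvd_iff.mp hX n n.lt_succ_self, add_zero]
    _ = _ := by
        rw [one_sub_one_sub_pow, mul_sum, map_sum]
        refine sum_congr rfl fun i _ => ?_
        rw [mul_smul_comm, pow_succ, mul_left_comm, hgf, mul_one, map_zsmul]

theorem derivative_exp_sub_one_pow_succ (k : ℕ) :
    d⁄dX A ((exp A - 1) ^ (k + 1)) = (k + 1) • ((exp A - 1) ^ (k + 1) + (exp A - 1) ^ k) := by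
  rw [Derivation.leibniz_pow, map_sub, derivative_exp, Derivation.map_one_eq_zero, sub_zero,
    Nat.add_sub_cancel, smul_eq_mul]
  congr 1
  ring

theorem factorial_mul_coeff_exp_sub_one_pow (m k : ℕ) :
    (m ! : A) * coeff m ((exp A - 1) ^ k) = k ! * stirlingSecond m k := by
  induction m generalizing k with
  | zero => cases k <;> simp
  | succ m ih =>
    cases k with
    | zero => simp [coeff_one]
    | succ k =>
      have hcoeff := coeff_derivative ((exp A - 1) ^ (k + 1)) m
      rw [derivative_exp_sub_one_pow_succ, map_nsmul, map_add, nsmul_eq_mul] at hcoeff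
      calc ((m + 1)! : A) * coeff (m + 1) ((exp A - 1) ^ (k + 1))
          = (k + 1) *
              (m ! * coeff m ((exp A - 1) ^ (k + 1)) + m ! * coeff m ((exp A - 1) ^ k)) := by
            rw [factorial_succ]; push_cast at hcoeff ⊢
            linear_combination (m ! : A) * hcoeff.symm
        _ = (k + 1)! * stirlingSecond (m + 1) (k + 1) := by
            rw [ih, ih, stirlingSecond_succ_succ, factorial_succ]; push_cast; ring

variable (A) in
noncomputable def expSubOneDivX : A⟦X⟧ :=
  mk fun n => algebraMap ℚ A (1 / (n + 1)!)

theorem X_mul_expSubOneDivX : X * expSubOneDivX A = exp A - 1 := by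
  ext n
  cases n with
  | zero => simp
  | succ n => simp [expSubOneDivX, coeff_succ_X_mul, coeff_one]

theorem constantCoeff_expSubOneDivX : constantCoeff (expSubOneDivX A) = 1 := by
  simp [expSubOneDivX, ← coeff_zero_eq_constantCoeff_apply]

theorem bernoulliPowerSeries_mul_expSubOneDivX :
    bernoulliPowerSeries A * expSubOneDivX A = 1 :=
  X_mul_cancel <| by
    rw [mul_left_comm, X_mul_expSubOneDivX, bernoulliPowerSeries_mul_exp_sub_one, mul_one]

theorem factorial_mul_coeff_expSubOneDivX_pow (n i : ℕ) :
    ((n + i)! : A) * coeff n (expSubOneDivX A ^ i) = i ! * stirlingSecond (n + i) i := by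
  rw [← factorial_mul_coeff_exp_sub_one_pow, ← X_mul_expSubOneDivX, mul_pow,
    coeff_X_pow_mul]

end PowerSeries

open PowerSeries

/-- B_n = sum_{i=0}^n (-1)^i C(n+1,i+1)/C(n+i,i) S(n+i,i). -/
theorem bernoulli_eq_sum_stirling2_ratio (n : ℕ) :
    bernoulli n = ∑ i ∈ Finset.range (n + 1),
      (-1) ^ i * ((n + 1).choose (i + 1) : ℚ) / ((n + i).choose i : ℚ)
        * stirling2 (n + i) i := by
  have hB : bernoulli n = n ! * coeff n (bernoulliPowerSeries ℚ) := by
    simp [bernoulliPowerSeries, field]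
  rw [hB, coeff_eq_sum_coeff_pow_of_mul_eq_one bernoulliPowerSeries_mul_expSubOneDivX
    constantCoeff_expSubOneDivX, mul_sum, stirling2_eq_stirlingSecond]
  refine sum_congr rfl fun i _ => ?_
  have hcoeff : coeff n (expSubOneDivX ℚ ^ i) = i ! * stirlingSecond (n + i) i / (n + i)! :=
    eq_div_of_mul_eq (by positivity) (by rw [mul_comm, factorial_mul_coeff_expSubOneDivX_pow])
  rw [zsmul_eq_mul, hcoeff, ← choose_symm_add, cast_add_choose]
  push_cast
  field_simp
end

section
/- For every nonnegative integer k and every real t, the k-th derivative of g(t) = 1/(e^t+1) satisfies g^{(k)}(t) = (-1)^{k+1} ∑_{m=1}^{k+1} (-1)^m (m-1)! S(k+1,m) (1/(e^t+1))^m, where S denotes Stirling numbers of the second kind. -/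
/-!
Since `g = 1 / (e^t + 1)` solves `g' = g² - g`, the `k`-th derivative of `g` is `P_k(g)` for the
polynomials `P_0 = X`, `P_{k+1} = P_k' · (X² - X)`. Writing `P' · (X - X²) = (1 - X) · (X P')`, the
operator `X d/dX` turns the coefficients `(-1)^m (m-1)! S(n,m)` into `(-1)^m m! S(n,m)`, and
multiplying by `1 - X` takes consecutive differences of coefficients; the Stirling recurrence
`S(n+1, m+1) = (m+1) S(n, m+1) + S(n, m)` says that these differences are the coefficients of
the next polynomial.
-/

open Polynomial Finset
open scoped Nat

theorem iteratedDeriv_eq_eval_comp_of_hasDerivAt {𝕜 : Type*} [NontriviallyNormedField 𝕜]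
    {f : 𝕜 → 𝕜} {Q : 𝕜[X]} (hf : ∀ x, HasDerivAt f (Q.eval (f x)) x)
    {P : ℕ → 𝕜[X]} (h0 : P 0 = X) (hP : ∀ k, P (k + 1) = derivative (P k) * Q) (k : ℕ) :
    iteratedDeriv k f = fun x => (P k).eval (f x) := by
  induction k with
  | zero => simp [h0]
  | succ k ih =>
    funext x
    rw [iteratedDeriv_succ, ih, hP, eval_mul]
    exact (((P k).hasDerivAt (f x)).comp x (hf x)).deriv

theorem hasDerivAt_one_div_exp_add_one (t : ℝ) :
    HasDerivAt (fun s => 1 / (Real.exp s + 1))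
      ((X ^ 2 - X : ℝ[X]).eval (1 / (Real.exp t + 1))) t := by
  refine ((hasDerivAt_const t 1).div ((Real.hasDerivAt_exp t).add_const 1)
    (by positivity)).congr_deriv ?_
  simp only [eval_sub, eval_pow, eval_X]
  field_simp
  ring

theorem stirling2_succ_zero (n : ℕ) : stirling2 (n + 1) 0 = 0 := rfl

theorem stirling2_succ_succ (n k : ℕ) :
    stirling2 (n + 1) (k + 1) = (k + 1) * stirling2 n (k + 1) + stirling2 n k := rfl

theorem stirling2_eq_zero_of_lt {n k : ℕ} (h : n < k) : stirling2 n k = 0 := by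
  induction n generalizing k with
  | zero => obtain ⟨k, rfl⟩ := Nat.exists_eq_add_one_of_ne_zero h.ne'; rfl
  | succ n ih =>
    obtain ⟨k, rfl⟩ := Nat.exists_eq_add_one_of_ne_zero (by omega : k ≠ 0)
    rw [stirling2_succ_succ, ih (by omega), ih (by omega), mul_zero]

theorem sum_range_sub_mul_pow_succ {R : Type*} [CommRing R] (v : ℕ → R) (x : R) (n : ℕ) :
    ∑ j ∈ range n, (v (j + 1) - v j) * x ^ (j + 1)
      = (1 - x) * ∑ j ∈ range n, v j * x ^ j + v n * x ^ n - v 0 := by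
  induction n with
  | zero => simp
  | succ n ih => rw [sum_range_succ, ih, sum_range_succ]; ring

section StirlingPoly

variable {R : Type*} [CommRing R]

/-- The `m = 0` term, where `(0 - 1)! = 0! = 1`, vanishes only for `n ≥ 1`. -/
noncomputable def stirlingPoly (n : ℕ) : R[X] :=
  ∑ m ∈ range (n + 1), C ((-1) ^ m * ((m - 1)! : R) * stirling2 n m) * X ^ m

theorem derivative_stirlingPoly_mul_X_sub_X_sq (n : ℕ) :
    derivative (stirlingPoly (n + 1)) * (X - X ^ 2) = (stirlingPoly (n + 2) : R[X]) := by
  set v : ℕ → R[X] := fun j => C ((-1) ^ j * (j ! : R) * stirling2 (n + 1) j) with hv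
  have hderiv : derivative (stirlingPoly (n + 1)) * (X - X ^ 2)
      = (1 - X) * ∑ j ∈ range (n + 2), v j * X ^ j := by
    rw [stirlingPoly, derivative_sum, sum_mul, mul_sum]
    refine sum_congr rfl fun m _ => ?_
    rw [derivative_C_mul_X_pow]
    cases m with
    | zero => simp [hv, stirling2_succ_zero]
    | succ m =>
      simp only [hv, Nat.add_sub_cancel, Nat.factorial_succ, map_mul, map_pow, map_neg, map_one,
        map_natCast]
      push_cast
      ring
  have hdiff : (stirlingPoly (n + 2) : R[X])
      = ∑ j ∈ range (n + 2), (v (j + 1) - v j) * X ^ (j + 1) := by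
    rw [stirlingPoly, sum_range_succ']
    simp only [stirling2_succ_zero, Nat.cast_zero, mul_zero, map_zero, zero_mul, add_zero]
    refine sum_congr rfl fun j _ => ?_
    simp only [hv, stirling2_succ_succ, Nat.add_sub_cancel, Nat.factorial_succ, map_mul, map_pow,
      map_neg, map_one, map_natCast]
    push_cast
    ring
  rw [hderiv, hdiff, sum_range_sub_mul_pow_succ]
  simp [hv, stirling2_eq_zero_of_lt, stirling2_succ_zero]

theorem eval_stirlingPoly_succ (n : ℕ) (x : R) :
    (stirlingPoly (n + 1)).eval x
      = ∑ m ∈ Icc 1 (n + 1), (-1) ^ m * ((m - 1)! : R) * stirling2 (n + 1) m * x ^ m := by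
  rw [stirlingPoly, eval_finsetSum, range_eq_Ico, sum_eq_sum_Ico_succ_bot (by omega),
    Ico_add_one_right_eq_Icc]
  simp [stirling2_succ_zero]

end StirlingPoly

/-- The `k`-th derivative of `1/(e^t+1)` equals
`(-1)^{k+1} ∑_{m=1}^{k+1} (-1)^m (m-1)! S(k+1,m) (1/(e^t+1))^m`. -/
theorem iteratedDeriv_one_div_exp_add_one (k : ℕ) (t : ℝ) :
    iteratedDeriv k (fun s => 1 / (Real.exp s + 1)) t
      = (-1) ^ (k + 1) * ∑ m ∈ Finset.Icc 1 (k + 1),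
          (-1) ^ m * ((m - 1).factorial : ℝ) * (stirling2 (k + 1) m : ℝ) *
            (1 / (Real.exp t + 1)) ^ m := by
  have h0 : C ((-1) ^ (0 + 1)) * stirlingPoly (0 + 1) = (X : ℝ[X]) := by
    simp [stirlingPoly, sum_range_succ, stirling2_succ_zero, show stirling2 1 1 = 1 from rfl]
  have hP (k : ℕ) : C ((-1) ^ (k + 2)) * stirlingPoly (k + 2)
      = derivative (C ((-1) ^ (k + 1)) * stirlingPoly (k + 1)) * (X ^ 2 - X : ℝ[X]) := by
    rw [← derivative_stirlingPoly_mul_X_sub_X_sq, derivative_C_mul]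
    simp only [pow_succ, map_mul, map_neg, map_one]
    ring
  rw [iteratedDeriv_eq_eval_comp_of_hasDerivAt hasDerivAt_one_div_exp_add_one
    (P := fun k => C ((-1) ^ (k + 1)) * stirlingPoly (k + 1)) h0 hP]
  simp only [eval_mul, eval_C, eval_stirlingPoly_succ]
end
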